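/- If H is a Hilbert space in a unital C*-algebra A and Y ∈ A, then there is a unique bounded linear map T ↦ Tr_H(YT) from the trace class operators L¹(H) on H to A such that Tr_H(Y ψ'ψ*) = ψ* Y ψ' for all ψ, ψ' ∈ H; moreover its norm is at most ‖Y‖ and Tr_H(YT) = Tr_H(TY) for all T ∈ L¹(H) commuting appropriately (where the right side means the partial trace of TY). -/

import Mathlib

set_option linter.unusedSectionVars false
set_option maxHeartbeats 1000000
noncomputable section
open scoped ComplexConjugate

variable {H : Type*} [NormedAddCommGroup H] [InnerProductSpace ℂ H] [CompleteSpace H]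

/-- `T` is a trace class operator on the Hilbert space `H`: it admits a decomposition
`T = ∑ₙ xₙ ⟪yₙ, ·⟫` (i.e. `T = ∑ₙ xₙ yₙ*`) with `∑ₙ ‖xₙ‖‖yₙ‖ < ∞`.  (This is the
projective-norm characterization of `L¹(H)`.) -/
def IsTraceClass (T : H →L[ℂ] H) : Prop :=
  ∃ x y : ℕ → H, Summable (fun n => ‖x n‖ * ‖y n‖) ∧
    ∀ v : H, HasSum (fun n => (inner ℂ (y n) v : ℂ) • x n) (T v)

/-- The rank one operator `ψ'ψ* : ξ ↦ ⟪ψ, ξ⟫ ψ'`. -/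
def rankOne (ψ' ψ : H) : H →L[ℂ] H := (innerSL ℂ ψ).smulRight ψ'

local notation "⟪" x ", " y "⟫" => @inner ℂ _ _ x y

namespace PartialTraceAux

variable {A : Type*} [NormedRing A] [StarRing A] [CStarRing A] [NormedAlgebra ℂ A]
  [StarModule ℂ A] [CompleteSpace A]

lemma norm_one_le : ‖(1 : A)‖ ≤ 1 := by
  have h : ‖(1 : A)‖ * ‖(1 : A)‖ = ‖(1 : A)‖ := by
    have := CStarRing.norm_star_mul_self (x := (1 : A))
    rw [star_one, one_mul] at this; exact this.symm
  nlinarith [norm_nonneg (1 : A)]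

variable (j : H →ₗ[ℂ] A) (hj : ∀ ψ φ : H, star (j ψ) * j φ = (⟪ψ, φ⟫) • (1 : A))

include hj

lemma norm_j_le (ψ : H) : ‖j ψ‖ ≤ ‖ψ‖ := by
  have h1 : ‖j ψ‖ * ‖j ψ‖ = ‖ψ‖ * ‖ψ‖ * ‖(1 : A)‖ := by
    rw [← CStarRing.norm_star_mul_self, hj, norm_smul, inner_self_eq_norm_sq_to_K]
    norm_num [sq]
  nlinarith [norm_nonneg (j ψ), norm_nonneg ψ, norm_one_le (A := A), norm_nonneg (1 : A),
    mul_self_nonneg (‖ψ‖)]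

lemma norm_term_le (Y : A) (φ ψ : H) : ‖star (j ψ) * Y * j φ‖ ≤ ‖Y‖ * (‖φ‖ * ‖ψ‖) := by
  calc ‖star (j ψ) * Y * j φ‖ ≤ ‖star (j ψ) * Y‖ * ‖j φ‖ := norm_mul_le _ _
    _ ≤ ‖star (j ψ)‖ * ‖Y‖ * ‖j φ‖ :=
        mul_le_mul_of_nonneg_right (norm_mul_le _ _) (norm_nonneg _)
    _ = ‖j ψ‖ * ‖Y‖ * ‖j φ‖ := by rw [norm_star]
    _ ≤ ‖ψ‖ * ‖Y‖ * ‖φ‖ := by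
        gcongr
        · exact norm_j_le j hj ψ
        · exact norm_j_le j hj φ
    _ = ‖Y‖ * (‖φ‖ * ‖ψ‖) := by ring

lemma summable_term (Y : A) (x y : ℕ → H) (hxy : Summable fun n => ‖x n‖ * ‖y n‖) :
    Summable fun n => star (j (y n)) * Y * j (x n) :=
  Summable.of_norm <| Summable.of_nonneg_of_le (fun _ => norm_nonneg _)
    (fun n => norm_term_le j hj Y (x n) (y n)) (hxy.mul_left ‖Y‖)

omit hj in
lemma hilbert_cs {ι : Type*} (b : HilbertBasis ι ℂ H) (u w : H) :
    Summable (fun i => ‖(⟪u, b i⟫ : ℂ) * ⟪b i, w⟫‖) ∧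
      ∑' i, ‖(⟪u, b i⟫ : ℂ) * ⟪b i, w⟫‖ ≤ ‖u‖ * ‖w‖ := by
  set a : ι → ℝ := fun i => ‖(⟪b i, u⟫ : ℂ)‖ with ha_def
  set c : ι → ℝ := fun i => ‖(⟪b i, w⟫ : ℂ)‖ with hc_def
  have hnorm : ∀ i, ‖(⟪u, b i⟫ : ℂ) * ⟪b i, w⟫‖ = a i * c i := by
    intro i; rw [norm_mul, norm_inner_symm]
  have ha : Summable fun i => a i ^ 2 := Orthonormal.inner_products_summable _ b.orthonormal
  have hA : ∑' i, a i ^ 2 ≤ ‖u‖ ^ 2 := Orthonormal.tsum_inner_products_le _ b.orthonormal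
  have hc : Summable fun i => c i ^ 2 := Orthonormal.inner_products_summable _ b.orthonormal
  have hC : ∑' i, c i ^ 2 ≤ ‖w‖ ^ 2 := Orthonormal.tsum_inner_products_le _ b.orthonormal
  have hs : Summable fun i => a i * c i := by
    refine Summable.of_nonneg_of_le (fun i => mul_nonneg (norm_nonneg _) (norm_nonneg _))
      (fun i => ?_) ((ha.add hc).div_const 2)
    nlinarith [sq_nonneg (a i - c i)]
  constructor
  · simp only [hnorm]; exact hs
  · rw [tsum_congr hnorm]
    rcases eq_or_lt_of_le (norm_nonneg u) with hu | hu
    · have hu0 : u = 0 := by rw [← norm_eq_zero]; exact hu.symm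
      have : ∀ i, a i * c i = 0 := by intro i; simp [ha_def, hu0]
      rw [tsum_congr this]; simp [← hu]
    rcases eq_or_lt_of_le (norm_nonneg w) with hw | hw
    · have hw0 : w = 0 := by rw [← norm_eq_zero]; exact hw.symm
      have : ∀ i, a i * c i = 0 := by intro i; simp [hc_def, hw0]
      rw [tsum_congr this]; simp [← hw]
    set t : ℝ := ‖w‖ / ‖u‖ with ht
    have htpos : 0 < t := div_pos hw hu
    have key : ∀ i, a i * c i ≤ (t * a i ^ 2 + c i ^ 2 / t) / 2 := by
      intro i
      have h2 : 2 * (a i * c i) * t ≤ t ^ 2 * a i ^ 2 + c i ^ 2 := by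
        nlinarith [sq_nonneg (t * a i - c i)]
      calc a i * c i = (2 * (a i * c i) * t) / (2 * t) := by
            field_simp
        _ ≤ (t ^ 2 * a i ^ 2 + c i ^ 2) / (2 * t) :=
            (div_le_div_iff_of_pos_right (by positivity)).mpr h2
        _ = (t * a i ^ 2 + c i ^ 2 / t) / 2 := by
            field_simp
    have hsr : Summable fun i => (t * a i ^ 2 + c i ^ 2 / t) / 2 :=
      ((ha.mul_left t).add (hc.div_const t)).div_const 2
    calc ∑' i, a i * c i ≤ ∑' i, (t * a i ^ 2 + c i ^ 2 / t) / 2 := Summable.tsum_le_tsum key hs hsr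
      _ = (t * ∑' i, a i ^ 2 + (∑' i, c i ^ 2) / t) / 2 := by
          rw [tsum_div_const, Summable.tsum_add (ha.mul_left t) (hc.div_const t), tsum_mul_left,
            tsum_div_const]
      _ ≤ (t * ‖u‖ ^ 2 + ‖w‖ ^ 2 / t) / 2 := by gcongr
      _ = ‖u‖ * ‖w‖ := by rw [ht]; field_simp; ring

lemma riesz (Y : A) (f : StrongDual ℂ A) :
    ∃ m : H → H, (∀ u v : H, ⟪v, m u⟫ = f (star (j v) * Y * j u)) ∧
      ∀ u : H, ‖m u‖ ≤ ‖f‖ * ‖Y‖ * ‖u‖ := by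
  have hbound : ∀ u v : H,
      ‖(starRingEnd ℂ) (f (star (j v) * Y * j u))‖ ≤ ‖f‖ * ‖Y‖ * ‖u‖ * ‖v‖ := by
    intro u v
    rw [RCLike.norm_conj]
    calc ‖f (star (j v) * Y * j u)‖ ≤ ‖f‖ * ‖star (j v) * Y * j u‖ := f.le_opNorm _
      _ ≤ ‖f‖ * (‖Y‖ * (‖u‖ * ‖v‖)) := by
          gcongr
          exact norm_term_le j hj Y u v
      _ = ‖f‖ * ‖Y‖ * ‖u‖ * ‖v‖ := by ring
  have hmk : ∀ u : H, ∃ mu : H, (∀ v : H, ⟪v, mu⟫ = f (star (j v) * Y * j u)) ∧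
      ‖mu‖ ≤ ‖f‖ * ‖Y‖ * ‖u‖ := by
    intro u
    have hadd : ∀ v w : H, (starRingEnd ℂ) (f (star (j (v + w)) * Y * j u)) =
        (starRingEnd ℂ) (f (star (j v) * Y * j u)) +
          (starRingEnd ℂ) (f (star (j w) * Y * j u)) := by
      intro v w
      rw [map_add, star_add, add_mul, add_mul, map_add, map_add]
    have hsmul : ∀ (a : ℂ) (v : H), (starRingEnd ℂ) (f (star (j (a • v)) * Y * j u)) =
        a * (starRingEnd ℂ) (f (star (j v) * Y * j u)) := by
      intro a v
      rw [map_smul, star_smul, smul_mul_assoc, smul_mul_assoc, map_smul]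
      simp [smul_eq_mul, map_mul]
    set g0 : H →ₗ[ℂ] ℂ :=
      { toFun := fun v => (starRingEnd ℂ) (f (star (j v) * Y * j u))
        map_add' := hadd
        map_smul' := hsmul } with hg0
    set g1 : H →L[ℂ] ℂ := LinearMap.mkContinuous g0 (‖f‖ * ‖Y‖ * ‖u‖) (hbound u) with hg1
    refine ⟨(InnerProductSpace.toDual ℂ H).symm g1, fun v => ?_, ?_⟩
    · rw [← inner_conj_symm, InnerProductSpace.toDual_symm_apply]
      simp [hg1, hg0, LinearMap.mkContinuous_apply]
    · rw [LinearIsometryEquiv.norm_map]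
      exact LinearMap.mkContinuous_norm_le g0 (by positivity) (hbound u)
  choose m hm1 hm2 using hmk
  exact ⟨m, hm1, hm2⟩

lemma core (Y : A) (f : StrongDual ℂ A) {ι : Type*} (b : HilbertBasis ι ℂ H)
    (x y : ℕ → H) (hxy : Summable fun n => ‖x n‖ * ‖y n‖) (T : H →L[ℂ] H)
    (hT : ∀ v : H, HasSum (fun n => (⟪y n, v⟫ : ℂ) • x n) (T v)) :
    ∑' n, f (star (j (y n)) * Y * j (x n)) = ∑' i, f (star (j (b i)) * Y * j (T (b i))) := by
  obtain ⟨m, hm1, hm2⟩ := riesz j hj Y f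
  set g : ℕ → ι → ℂ := fun n i => ⟪y n, b i⟫ * ⟪b i, m (x n)⟫ with hgdef
  have hg1 : ∀ n, HasSum (g n) (f (star (j (y n)) * Y * j (x n))) := by
    intro n
    have h := b.hasSum_inner_mul_inner (y n) (m (x n))
    rwa [hm1 (x n) (y n)] at h
  have habs : Summable fun p : ℕ × ι => ‖g p.1 p.2‖ := by
    refine (summable_prod_of_nonneg fun _ => norm_nonneg _).2
      ⟨fun n => (hilbert_cs b (y n) (m (x n))).1, ?_⟩
    refine Summable.of_nonneg_of_le (fun n => tsum_nonneg fun i => norm_nonneg _)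
      (fun n => ?_) (hxy.mul_left (‖f‖ * ‖Y‖))
    calc ∑' i, ‖g n i‖ ≤ ‖y n‖ * ‖m (x n)‖ := (hilbert_cs b (y n) (m (x n))).2
      _ ≤ ‖y n‖ * (‖f‖ * ‖Y‖ * ‖x n‖) := by
          gcongr
          exact hm2 (x n)
      _ = ‖f‖ * ‖Y‖ * (‖x n‖ * ‖y n‖) := by ring
  have hunc : Summable (Function.uncurry g) := Summable.of_norm habs
  have hrow : ∀ i, HasSum (fun n => g n i) (f (star (j (b i)) * Y * j (T (b i)))) := by
    intro i
    set jL : H →L[ℂ] A := LinearMap.mkContinuous j 1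
      (fun v => by simpa using norm_j_le j hj v) with hjL
    set Fi : H →L[ℂ] ℂ :=
      f.comp (((ContinuousLinearMap.mul ℂ A) (star (j (b i)) * Y)).comp jL) with hFi
    have hFi_app : ∀ v : H, Fi v = f (star (j (b i)) * Y * j v) := by
      intro v; simp [hFi, hjL, LinearMap.mkContinuous_apply, mul_assoc]
    have h := (hT (b i)).mapL Fi
    have heq : (fun n => Fi ((⟪y n, b i⟫ : ℂ) • x n)) = fun n => g n i := by
      funext n
      rw [map_smul, smul_eq_mul, hFi_app, ← hm1 (x n) (b i)]
    rw [heq, hFi_app] at h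
    exact h
  calc ∑' n, f (star (j (y n)) * Y * j (x n)) = ∑' n, ∑' i, g n i :=
        tsum_congr fun n => (hg1 n).tsum_eq.symm
    _ = ∑' i, ∑' n, g n i := (Summable.tsum_comm hunc).symm
    _ = ∑' i, f (star (j (b i)) * Y * j (T (b i))) := tsum_congr fun i => (hrow i).tsum_eq

lemma welldef (Y : A) (x y x' y' : ℕ → H)
    (hxy : Summable fun n => ‖x n‖ * ‖y n‖) (hxy' : Summable fun n => ‖x' n‖ * ‖y' n‖)
    (T : H →L[ℂ] H)
    (hT : ∀ v : H, HasSum (fun n => (⟪y n, v⟫ : ℂ) • x n) (T v))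
    (hT' : ∀ v : H, HasSum (fun n => (⟪y' n, v⟫ : ℂ) • x' n) (T v)) :
    ∑' n, star (j (y n)) * Y * j (x n) = ∑' n, star (j (y' n)) * Y * j (x' n) := by
  obtain ⟨w, b, -⟩ := exists_hilbertBasis ℂ H
  rw [NormedSpace.eq_iff_forall_dual_eq ℂ]
  intro f
  rw [ContinuousLinearMap.map_tsum f (summable_term j hj Y x y hxy),
    ContinuousLinearMap.map_tsum f (summable_term j hj Y x' y' hxy'),
    core j hj Y f b x y hxy T hT, core j hj Y f b x' y' hxy' T hT']

end PartialTraceAux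

/-- If `H` is a Hilbert space in a unital C*-algebra `A` (realized by a
linear embedding `j : H → A` with `j(ψ)* j(ψ') = ⟪ψ, ψ'⟫ 1`) and `Y ∈ A`, then there is a
unique map `T ↦ Tr_H(YT)` from the trace class operators `L¹(H)` to `A` which is linear,
satisfies `Tr_H(Y ψ'ψ*) = ψ* Y ψ'` for all `ψ, ψ' ∈ H`, has norm at most `‖Y‖` with
respect to the trace norm, and is computed on any trace-norm decomposition
`T = ∑ₙ xₙ yₙ*` by the norm-convergent sum `Tr_H(YT) = ∑ₙ yₙ* Y xₙ` (in particular the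
partial traces of `YT` and `TY` agree). -/
theorem partial_trace_exists_unique
    (A : Type*) [NormedRing A] [StarRing A] [CStarRing A] [NormedAlgebra ℂ A]
    [StarModule ℂ A] [CompleteSpace A]
    (j : H →ₗ[ℂ] A)
    (hj : ∀ ψ φ : H, star (j ψ) * j φ = (inner ℂ ψ φ : ℂ) • (1 : A))
    (Y : A) :
    ∃! Φ : {T : H →L[ℂ] H // IsTraceClass T} → A,
      (∀ T S U : {T : H →L[ℂ] H // IsTraceClass T},
        (U : H →L[ℂ] H) = (T : H →L[ℂ] H) + (S : H →L[ℂ] H) → Φ U = Φ T + Φ S) ∧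
      (∀ (c : ℂ) (T U : {T : H →L[ℂ] H // IsTraceClass T}),
        (U : H →L[ℂ] H) = c • (T : H →L[ℂ] H) → Φ U = c • Φ T) ∧
      (∀ (ψ ψ' : H) (T : {T : H →L[ℂ] H // IsTraceClass T}),
        (T : H →L[ℂ] H) = rankOne ψ' ψ → Φ T = star (j ψ) * Y * j ψ') ∧
      (∀ (T : {T : H →L[ℂ] H // IsTraceClass T}) (x y : ℕ → H),
        Summable (fun n => ‖x n‖ * ‖y n‖) →
        (∀ v : H, HasSum (fun n => (inner ℂ (y n) v : ℂ) • x n) ((T : H →L[ℂ] H) v)) →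
        ‖Φ T‖ ≤ ‖Y‖ * ∑' n, ‖x n‖ * ‖y n‖) ∧
      (∀ (T : {T : H →L[ℂ] H // IsTraceClass T}) (x y : ℕ → H),
        Summable (fun n => ‖x n‖ * ‖y n‖) →
        (∀ v : H, HasSum (fun n => (inner ℂ (y n) v : ℂ) • x n) ((T : H →L[ℂ] H) v)) →
        HasSum (fun n => star (j (y n)) * Y * j (x n)) (Φ T)) := by
  classical
  set Φ : {T : H →L[ℂ] H // IsTraceClass T} → A := fun T =>
    ∑' n, star (j (T.2.choose_spec.choose n)) * Y * j (T.2.choose n) with hΦdef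
  have hΦ5 : ∀ (T : {T : H →L[ℂ] H // IsTraceClass T}) (x y : ℕ → H),
      Summable (fun n => ‖x n‖ * ‖y n‖) →
      (∀ v : H, HasSum (fun n => (inner ℂ (y n) v : ℂ) • x n) ((T : H →L[ℂ] H) v)) →
      HasSum (fun n => star (j (y n)) * Y * j (x n)) (Φ T) := by
    intro T x y hxy hT
    have hspec := T.2.choose_spec.choose_spec
    have h1 := (PartialTraceAux.summable_term j hj Y x y hxy).hasSum
    have heq : ∑' n, star (j (y n)) * Y * j (x n) = Φ T :=
      PartialTraceAux.welldef j hj Y x y T.2.choose T.2.choose_spec.choose hxy hspec.1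
        T.1 hT hspec.2
    rwa [heq] at h1
  refine ⟨Φ, ⟨?_, ?_, ?_, ?_, hΦ5⟩, ?_⟩
  · -- additivity
    rintro T S U hU
    obtain ⟨x1, y1, h1, h1'⟩ := T.2
    obtain ⟨x2, y2, h2, h2'⟩ := S.2
    set xx : ℕ → H := fun n => if n % 2 = 0 then x1 (n / 2) else x2 (n / 2) with hxx
    set yy : ℕ → H := fun n => if n % 2 = 0 then y1 (n / 2) else y2 (n / 2) with hyy
    have hxe : ∀ k, xx (2 * k) = x1 k := fun k => by
      have h : (2 * k) % 2 = 0 := by omega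
      have h' : (2 * k) / 2 = k := by omega
      simp [hxx, h, h']
    have hxo : ∀ k, xx (2 * k + 1) = x2 k := fun k => by
      have h : (2 * k + 1) % 2 = 1 := by omega
      have h' : (2 * k + 1) / 2 = k := by omega
      simp [hxx, h, h']
    have hye : ∀ k, yy (2 * k) = y1 k := fun k => by
      have h : (2 * k) % 2 = 0 := by omega
      have h' : (2 * k) / 2 = k := by omega
      simp [hyy, h, h']
    have hyo : ∀ k, yy (2 * k + 1) = y2 k := fun k => by
      have h : (2 * k + 1) % 2 = 1 := by omega
      have h' : (2 * k + 1) / 2 = k := by omega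
      simp [hyy, h, h']
    have hsum : Summable fun n => ‖xx n‖ * ‖yy n‖ := by
      have he : HasSum (fun k => ‖xx (2 * k)‖ * ‖yy (2 * k)‖)
          (∑' k, ‖x1 k‖ * ‖y1 k‖) := by
        have e : (fun k => ‖xx (2 * k)‖ * ‖yy (2 * k)‖) = fun k => ‖x1 k‖ * ‖y1 k‖ := by
          funext k; rw [hxe, hye]
        rw [e]; exact h1.hasSum
      have ho : HasSum (fun k => ‖xx (2 * k + 1)‖ * ‖yy (2 * k + 1)‖)
          (∑' k, ‖x2 k‖ * ‖y2 k‖) := by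
        have e : (fun k => ‖xx (2 * k + 1)‖ * ‖yy (2 * k + 1)‖) = fun k => ‖x2 k‖ * ‖y2 k‖ := by
          funext k; rw [hxo, hyo]
        rw [e]; exact h2.hasSum
      exact (he.even_add_odd ho).summable
    have hUsum : ∀ v : H, HasSum (fun n => (inner ℂ (yy n) v : ℂ) • xx n)
        ((U : H →L[ℂ] H) v) := by
      intro v
      have hv : (U : H →L[ℂ] H) v = (T : H →L[ℂ] H) v + (S : H →L[ℂ] H) v := by
        rw [hU]; simp
      rw [hv]
      refine HasSum.even_add_odd ?_ ?_
      · have e : (fun k => (inner ℂ (yy (2 * k)) v : ℂ) • xx (2 * k))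
            = fun k => (inner ℂ (y1 k) v : ℂ) • x1 k := by funext k; rw [hxe, hye]
        rw [e]; exact h1' v
      · have e : (fun k => (inner ℂ (yy (2 * k + 1)) v : ℂ) • xx (2 * k + 1))
            = fun k => (inner ℂ (y2 k) v : ℂ) • x2 k := by funext k; rw [hxo, hyo]
        rw [e]; exact h2' v
    have hA := hΦ5 U xx yy hsum hUsum
    have hB : HasSum (fun n => star (j (yy n)) * Y * j (xx n)) (Φ T + Φ S) := by
      refine HasSum.even_add_odd ?_ ?_
      · have e : (fun k => star (j (yy (2 * k))) * Y * j (xx (2 * k)))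
            = fun k => star (j (y1 k)) * Y * j (x1 k) := by funext k; rw [hxe, hye]
        rw [e]; exact hΦ5 T x1 y1 h1 h1'
      · have e : (fun k => star (j (yy (2 * k + 1))) * Y * j (xx (2 * k + 1)))
            = fun k => star (j (y2 k)) * Y * j (x2 k) := by funext k; rw [hxo, hyo]
        rw [e]; exact hΦ5 S x2 y2 h2 h2'
    exact hA.unique hB
  · -- scalar multiplication
    rintro c T U hU
    obtain ⟨x1, y1, h1, h1'⟩ := T.2
    have hsum : Summable fun n => ‖c • x1 n‖ * ‖y1 n‖ := by
      simpa [norm_smul, mul_assoc] using h1.mul_left ‖c‖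
    have hUsum : ∀ v : H, HasSum (fun n => (inner ℂ (y1 n) v : ℂ) • c • x1 n)
        ((U : H →L[ℂ] H) v) := by
      intro v
      have hv : (U : H →L[ℂ] H) v = c • ((T : H →L[ℂ] H) v) := by rw [hU]; simp
      rw [hv]
      have h := (h1' v).const_smul c
      simpa [smul_comm c] using h
    have hA := hΦ5 U (fun n => c • x1 n) y1 hsum hUsum
    have hB : HasSum (fun n => star (j (y1 n)) * Y * j (c • x1 n)) (c • Φ T) := by
      have h := (hΦ5 T x1 y1 h1 h1').const_smul c
      simpa [map_smul, mul_smul_comm] using h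
    exact hA.unique hB
  · -- rank one
    rintro ψ ψ' T hT
    set xψ : ℕ → H := fun n => if n = 0 then ψ' else 0 with hxψ
    set yψ : ℕ → H := fun n => if n = 0 then ψ else 0 with hyψ
    have hsum : Summable fun n => ‖xψ n‖ * ‖yψ n‖ := by
      apply summable_of_ne_finset_zero (s := {0})
      intro n hn
      simp only [Finset.mem_singleton] at hn
      simp [hxψ, hyψ, hn]
    have hTs : ∀ v : H, HasSum (fun n => (inner ℂ (yψ n) v : ℂ) • xψ n)
        ((T : H →L[ℂ] H) v) := by
      intro v
      have he : (fun n => (inner ℂ (yψ n) v : ℂ) • xψ n)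
          = fun n => if n = 0 then (inner ℂ ψ v : ℂ) • ψ' else 0 := by
        funext n; by_cases hn : n = 0 <;> simp [hxψ, hyψ, hn]
      rw [he, hT]
      have hr : (rankOne ψ' ψ : H →L[ℂ] H) v = (inner ℂ ψ v : ℂ) • ψ' := by
        simp [rankOne]
      rw [hr]
      exact hasSum_ite_eq 0 _
    have hA := hΦ5 T xψ yψ hsum hTs
    have hB : HasSum (fun n => star (j (yψ n)) * Y * j (xψ n)) (star (j ψ) * Y * j ψ') := by
      have he : (fun n => star (j (yψ n)) * Y * j (xψ n))
          = fun n => if n = 0 then star (j ψ) * Y * j ψ' else 0 := by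
        funext n; by_cases hn : n = 0 <;> simp [hxψ, hyψ, hn]
      rw [he]
      exact hasSum_ite_eq 0 _
    exact hA.unique hB
  · -- norm bound
    intro T x y hxy hT
    have hA := hΦ5 T x y hxy hT
    have hs : Summable fun n => ‖star (j (y n)) * Y * j (x n)‖ :=
      Summable.of_nonneg_of_le (fun _ => norm_nonneg _)
        (fun n => PartialTraceAux.norm_term_le j hj Y (x n) (y n)) (hxy.mul_left ‖Y‖)
    rw [← hA.tsum_eq]
    calc ‖∑' n, star (j (y n)) * Y * j (x n)‖ ≤ ∑' n, ‖star (j (y n)) * Y * j (x n)‖ :=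
        norm_tsum_le_tsum_norm hs
      _ ≤ ∑' n, ‖Y‖ * (‖x n‖ * ‖y n‖) :=
        Summable.tsum_le_tsum (fun n => PartialTraceAux.norm_term_le j hj Y (x n) (y n)) hs
          (hxy.mul_left ‖Y‖)
      _ = ‖Y‖ * ∑' n, ‖x n‖ * ‖y n‖ := tsum_mul_left
  · -- uniqueness
    intro Φ' hΦ'
    obtain ⟨-, -, -, -, h5'⟩ := hΦ'
    funext T
    obtain ⟨x, y, hxy, hT⟩ := T.2
    exact (h5' T x y hxy hT).unique (hΦ5 T x y hxy hT)
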